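/- arXiv:1512.03766 — 2 statements merged into one kernel-verified Lean document; each statement's English description precedes it below -/
import Mathlib

section
/- Fix u ∈ (0,1]. Define subsets of [0,1] recursively by A_u^1 = [0,u] and, for k ≥ 1, A_u^{k+1} = u·A_u^k ∪ (u + (1−u)·A_u^k), where u·A = {ua : a ∈ A} and u + (1−u)·A = {u + (1−u)a : a ∈ A}. If U is a uniform random variable on [0,1], then the sequence of random variables (1_{A_u^k}(U))_{k≥1} is an i.i.d. sequence of Bernoulli random variables with success probability u; that is, the indicator events {U ∈ A_u^k}, k ≥ 1, are mutually independent and each has probability u. -/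
/-!
Let `T` be the piecewise affine map sending `[0,u]` and `[u,1]` increasingly onto `[0,1]`. Away
from the point `u`, `x ∈ A_u^{k+1}` iff `T x ∈ A_u^k`, so `A_u^{k+1}` agrees a.e. with
`T^{-k}[0,u]`. Lebesgue measure on `[0,1]` is `T`-invariant, and `[0,u]` is independent of every
`T⁻¹ B` because on `[0,u]` the map `T` is the dilation by `1/u`. Peeling off the smallest index
then shows that the events `T^{-k}[0,u]` are independent, each of measure `u`.
-/

open MeasureTheory ProbabilityTheory Set

theorem Real.volume_preimage_sub_div {r : ℝ} (hr : 0 < r) (c : ℝ) (B : Set ℝ) :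
    volume ((fun x => (x - c) / r) ⁻¹' B) = ENNReal.ofReal r * volume B := by
  have h : (fun x => (x - c) / r) ⁻¹' B = (· + -c) ⁻¹' ((· * r⁻¹) ⁻¹' B) := by
    ext; simp [div_eq_mul_inv, sub_eq_add_neg]
  rw [h, measure_preimage_add_right, Real.volume_preimage_mul_right (inv_ne_zero hr.ne'), inv_inv,
    abs_of_pos hr]

section Iterate

variable {α : Type*} [MeasurableSpace α] {ν : Measure α} [IsProbabilityMeasure ν] {T : α → α}
  {I : Set α}

theorem MeasureTheory.MeasurePreserving.measure_biInter_preimage_iterate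
    (hT : MeasurePreserving T ν ν) (hI : MeasurableSet I)
    (hindep : ∀ B, MeasurableSet B → ν (I ∩ T ⁻¹' B) = ν I * ν B)
    (s : Finset ℕ) : ν (⋂ k ∈ s, T^[k] ⁻¹' I) = ν I ^ s.card := by
  induction s using Finset.induction_on_min with
  | empty => simp
  | insert a s has ih =>
    set Y := ⋂ k ∈ s, T^[k - (a + 1)] ⁻¹' I
    have hY : MeasurableSet Y :=
      Finset.measurableSet_biInter _ fun k _ => hT.measurable.iterate _ hI
    have hshift : ⋂ k ∈ s, T^[k] ⁻¹' I = T^[a + 1] ⁻¹' Y := by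
      simp only [Y, preimage_iInter₂, ← preimage_comp, ← Function.iterate_add]
      exact iInter₂_congr fun k hk => by rw [Nat.sub_add_cancel (has k hk)]
    have hνY : ν Y = ν I ^ s.card := by
      rw [← ih, hshift, (hT.iterate _).measure_preimage hY.nullMeasurableSet]
    rw [Finset.set_biInter_insert, hshift, Function.iterate_succ', preimage_comp,
      ← preimage_inter,
      (hT.iterate a).measure_preimage (hI.inter (hT.measurable hY)).nullMeasurableSet, hindep Y hY,
      hνY, Finset.card_insert_of_notMem fun h => (has a h).false, pow_succ']

theorem MeasureTheory.MeasurePreserving.iIndepSet_preimage_iterate (hT : MeasurePreserving T ν ν)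
    (hI : MeasurableSet I) (hindep : ∀ B, MeasurableSet B → ν (I ∩ T ⁻¹' B) = ν I * ν B) :
    iIndepSet (fun k => T^[k] ⁻¹' I) ν := by
  rw [iIndepSet_iff_meas_biInter fun k => hT.measurable.iterate k hI]
  intro s
  simp only [hT.measure_biInter_preimage_iterate hI hindep,
    fun k => (hT.iterate k).measure_preimage hI.nullMeasurableSet, Finset.prod_const]

end Iterate

section Transfer

variable {Ω ι : Type*} [MeasurableSpace Ω] {μ : Measure Ω} {E F : ι → Set Ω}

theorem ProbabilityTheory.iIndepSet.congr_ae (hind : iIndepSet E μ)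
    (hE : ∀ i, MeasurableSet (E i)) (hF : ∀ i, MeasurableSet (F i)) (h : ∀ i, E i =ᵐ[μ] F i) :
    iIndepSet F μ := by
  rw [iIndepSet_iff_meas_biInter hE] at hind
  rw [iIndepSet_iff_meas_biInter hF]
  intro s
  rw [← measure_congr (s.eventuallyEq_iInter fun i _ => h i), hind s]
  exact Finset.prod_congr rfl fun i _ => measure_congr (h i)

theorem ProbabilityTheory.iIndepSet_preimage_iff {β : Type*} [MeasurableSpace β] {U : Ω → β}
    (hU : Measurable U) {E : ι → Set β} (hE : ∀ i, MeasurableSet (E i)) :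
    iIndepSet (fun i => U ⁻¹' E i) μ ↔ iIndepSet E (μ.map U) := by
  rw [iIndepSet_iff_meas_biInter fun i => hU (hE i), iIndepSet_iff_meas_biInter hE]
  refine forall_congr' fun s => ?_
  rw [Measure.map_apply hU (Finset.measurableSet_biInter _ fun i _ => hE i), preimage_iInter₂]
  simp only [Measure.map_apply hU (hE _)]

end Transfer

-- The second branch only matters on `(u, 1]`, which is empty when `u = 1`.
noncomputable def digitShift (u x : ℝ) : ℝ := if x ≤ u then x / u else (x - u) / (1 - u)

variable {u : ℝ}

theorem measurable_digitShift : Measurable (digitShift u) :=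
  Measurable.ite measurableSet_Iic (measurable_id.div_const u)
    ((measurable_id.sub_const u).div_const (1 - u))

theorem volume_preimage_digitShift_inter_Icc (hu : 0 < u) (B : Set ℝ) :
    volume (digitShift u ⁻¹' B ∩ Icc 0 u) = ENNReal.ofReal u * volume (B ∩ Icc 0 1) := by
  have h : digitShift u ⁻¹' B ∩ Icc 0 u = (fun x => (x - 0) / u) ⁻¹' (B ∩ Icc 0 1) := by
    ext x
    simp only [digitShift, mem_inter_iff, mem_preimage, mem_Icc, sub_zero, div_nonneg_iff,
      div_le_one hu, hu.le, hu.not_ge]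
    by_cases hx : x ≤ u <;> simp [hx]
  rw [h, Real.volume_preimage_sub_div hu]

theorem volume_preimage_digitShift_inter_Ioc (hu : u ≤ 1) (B : Set ℝ) :
    volume (digitShift u ⁻¹' B ∩ Ioc u 1) = ENNReal.ofReal (1 - u) * volume (B ∩ Icc 0 1) := by
  rcases hu.lt_or_eq with hu | rfl
  · have hu' : 0 < 1 - u := sub_pos.2 hu
    have h : digitShift u ⁻¹' B ∩ Ioc u 1 = (fun x => (x - u) / (1 - u)) ⁻¹' (B ∩ Ioc 0 1) := by
      ext x
      simp only [digitShift, mem_inter_iff, mem_preimage, mem_Ioc, div_pos_iff_of_pos_right hu',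
        sub_pos, div_le_one hu', sub_le_sub_iff_right]
      by_cases hx : x ≤ u <;> simp [hx]
    rw [h, Real.volume_preimage_sub_div hu',
      measure_congr (ae_eq_set_inter (ae_eq_refl B) Ioc_ae_eq_Icc)]
  · simp

theorem measurePreserving_digitShift (hu0 : 0 < u) (hu1 : u ≤ 1) :
    MeasurePreserving (digitShift u) (volume.restrict (Icc 0 1)) (volume.restrict (Icc 0 1)) := by
  refine ⟨measurable_digitShift, Measure.ext fun B hB => ?_⟩
  have hsplit : volume (digitShift u ⁻¹' B ∩ Icc 0 1)
      = volume (digitShift u ⁻¹' B ∩ Icc 0 u) + volume (digitShift u ⁻¹' B ∩ Ioc u 1) := by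
    rw [← Icc_union_Ioc_eq_Icc hu0.le hu1, inter_union_distrib_left]
    exact measure_union
      ((Iic_disjoint_Ioc le_rfl).mono (inter_subset_right.trans Icc_subset_Iic_self)
        inter_subset_right)
      (measurable_digitShift hB |>.inter measurableSet_Ioc)
  rw [Measure.map_apply measurable_digitShift hB, Measure.restrict_apply' measurableSet_Icc,
    Measure.restrict_apply' measurableSet_Icc, hsplit, volume_preimage_digitShift_inter_Icc hu0,
    volume_preimage_digitShift_inter_Ioc hu1, ← add_mul, ← ENNReal.ofReal_add hu0.le (by linarith),
    add_sub_cancel, ENNReal.ofReal_one, one_mul]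

theorem measure_Icc_inter_preimage_digitShift (hu0 : 0 < u) (hu1 : u ≤ 1) (B : Set ℝ) :
    volume.restrict (Icc 0 1) (Icc 0 u ∩ digitShift u ⁻¹' B)
      = volume.restrict (Icc 0 1) (Icc 0 u) * volume.restrict (Icc 0 1) B := by
  have hsub : Icc 0 u ⊆ Icc (0 : ℝ) 1 := Icc_subset_Icc_right hu1
  rw [Measure.restrict_apply' measurableSet_Icc, Measure.restrict_apply' measurableSet_Icc,
    Measure.restrict_apply' measurableSet_Icc, inter_right_comm, inter_eq_left.2 hsub, inter_comm,
    volume_preimage_digitShift_inter_Icc hu0, Real.volume_Icc, sub_zero]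

theorem mem_image_union_image_iff_digitShift (hu0 : 0 < u) (hu1 : u ≤ 1) {B : Set ℝ}
    (hB : B ⊆ Icc 0 1) {x : ℝ} (hx : x ∈ Icc 0 1) (hxu : x ≠ u) :
    x ∈ (fun a => u * a) '' B ∪ (fun a => u + (1 - u) * a) '' B ↔ digitShift u x ∈ B := by
  rcases hxu.lt_or_gt with hxu | hux
  · rw [digitShift, if_pos hxu.le]
    constructor
    · rintro (⟨a, ha, rfl⟩ | ⟨a, ha, rfl⟩)
      · rwa [mul_div_cancel_left₀ a hu0.ne']
      · nlinarith [(hB ha).1]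
    · exact fun h => Or.inl ⟨x / u, h, mul_div_cancel₀ x hu0.ne'⟩
  · have hu1' : 0 < 1 - u := by linarith [hx.2]
    rw [digitShift, if_neg hux.not_ge]
    constructor
    · rintro (⟨a, ha, rfl⟩ | ⟨a, ha, rfl⟩)
      · nlinarith [(hB ha).2]
      · rwa [add_sub_cancel_left, mul_div_cancel_left₀ a hu1'.ne']
    · exact fun h => Or.inr ⟨(x - u) / (1 - u), h, by field_simp; ring⟩

section Nested

variable {A : ℕ → Set ℝ} (hu0 : 0 < u) (hu1 : u ≤ 1) (hA1 : A 1 = Icc 0 u)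
  (hArec : ∀ k ≥ 1, A (k + 1) = (fun a => u * a) '' A k ∪ (fun a => u + (1 - u) * a) '' A k)
include hu0 hu1 hA1 hArec

theorem isCompact_and_subset_Icc_of_nested : ∀ k ≥ 1, IsCompact (A k) ∧ A k ⊆ Icc 0 1 := by
  have hmaps₀ : MapsTo (fun a => u * a) (Icc 0 1) (Icc 0 1) := fun a ha =>
    ⟨mul_nonneg hu0.le ha.1, mul_le_one₀ hu1 ha.1 ha.2⟩
  have hmaps₁ : MapsTo (fun a => u + (1 - u) * a) (Icc 0 1) (Icc 0 1) := fun a ha =>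
    ⟨by nlinarith [ha.1], by nlinarith [ha.2]⟩
  refine Nat.le_induction ⟨hA1 ▸ isCompact_Icc, hA1 ▸ Icc_subset_Icc_right hu1⟩ ?_
  rintro k hk ⟨hK, hsub⟩
  rw [hArec k hk]
  exact ⟨(hK.image (by fun_prop)).union (hK.image (by fun_prop)),
    union_subset ((hmaps₀.mono_left hsub).image_subset) ((hmaps₁.mono_left hsub).image_subset)⟩

theorem nested_ae_eq_preimage_iterate_digitShift (k : ℕ) :
    A (k + 1) =ᵐ[volume.restrict (Icc 0 1)] (digitShift u)^[k] ⁻¹' Icc 0 u := by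
  induction k with
  | zero => rw [zero_add, hA1]; rfl
  | succ k ih =>
    have hstep : A (k + 1 + 1) =ᵐ[volume.restrict (Icc 0 1)] digitShift u ⁻¹' A (k + 1) := by
      filter_upwards [ae_restrict_mem measurableSet_Icc, Measure.ae_ne _ u] with x hx hxu
      rw [hArec (k + 1) k.succ_pos]
      exact propext (mem_image_union_image_iff_digitShift hu0 hu1
        (isCompact_and_subset_Icc_of_nested hu0 hu1 hA1 hArec (k + 1) k.succ_pos).2 hx hxu)
    rw [Function.iterate_succ, preimage_comp]
    exact hstep.trans
      ((measurePreserving_digitShift hu0 hu1).quasiMeasurePreserving.preimage_ae_eq ih)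

end Nested

theorem uniform_nested_sets_iid_bernoulli_general {Ω : Type*} [MeasurableSpace Ω] {μ : Measure Ω}
    {u : ℝ} (hu0 : 0 < u) (hu1 : u ≤ 1)
    (U : Ω → ℝ) (hUmeas : Measurable U)
    (hUunif : μ.map U = volume.restrict (Set.Icc (0 : ℝ) 1))
    (A : ℕ → Set ℝ) (hA1 : A 1 = Set.Icc 0 u)
    (hArec : ∀ k ≥ 1, A (k + 1) =
      ((fun a => u * a) '' A k) ∪ ((fun a => u + (1 - u) * a) '' A k)) :
    iIndepSet (fun k : ℕ => U ⁻¹' A (k + 1)) μ ∧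
      ∀ k ≥ 1, μ (U ⁻¹' A k) = ENNReal.ofReal u := by
  have hT := measurePreserving_digitShift hu0 hu1
  have hA := isCompact_and_subset_Icc_of_nested hu0 hu1 hA1 hArec
  have hAe := nested_ae_eq_preimage_iterate_digitShift hu0 hu1 hA1 hArec
  have hmeas : ∀ k, MeasurableSet (A (k + 1)) := fun k => (hA (k + 1) k.succ_pos).1.measurableSet
  have : IsProbabilityMeasure (volume.restrict (Icc (0 : ℝ) 1)) := ⟨by simp⟩
  constructor
  · rw [iIndepSet_preimage_iff hUmeas hmeas, hUunif]
    exact (hT.iIndepSet_preimage_iterate measurableSet_Icc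
      fun B _ => measure_Icc_inter_preimage_digitShift hu0 hu1 B).congr_ae
      (fun k => hT.measurable.iterate k measurableSet_Icc) hmeas fun k => (hAe k).symm
  · intro k hk
    obtain ⟨k, rfl⟩ := Nat.exists_eq_add_of_le' hk
    rw [← Measure.map_apply hUmeas (hmeas k), hUunif, measure_congr (hAe k),
      (hT.iterate k).measure_preimage measurableSet_Icc.nullMeasurableSet,
      Measure.restrict_apply' measurableSet_Icc, inter_eq_left.2 (Icc_subset_Icc_right hu1),
      Real.volume_Icc, sub_zero]

/-- Fix `u ∈ (0,1]` and define `A_u^1 = [0,u]`, `A_u^{k+1} = u·A_u^k ∪ (u + (1-u)·A_u^k)`.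
If `U` is uniformly distributed on `[0,1]`, then the indicator events `{U ∈ A_u^k}`, `k ≥ 1`,
are mutually independent and each has probability `u`; i.e. `(1_{A_u^k}(U))_{k ≥ 1}` is an
i.i.d. sequence of Bernoulli(u) random variables. -/
theorem uniform_nested_sets_iid_bernoulli {Ω : Type*} [MeasurableSpace Ω] {μ : Measure Ω}
    [IsProbabilityMeasure μ] {u : ℝ} (hu0 : 0 < u) (hu1 : u ≤ 1)
    (U : Ω → ℝ) (hUmeas : Measurable U)
    (hUunif : μ.map U = volume.restrict (Set.Icc (0 : ℝ) 1))
    (A : ℕ → Set ℝ) (hA1 : A 1 = Set.Icc 0 u)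
    (hArec : ∀ k ≥ 1, A (k + 1) =
      ((fun a => u * a) '' A k) ∪ ((fun a => u + (1 - u) * a) '' A k)) :
    iIndepSet (fun k : ℕ => U ⁻¹' A (k + 1)) μ ∧
      ∀ k ≥ 1, μ (U ⁻¹' A k) = ENNReal.ofReal u :=
  uniform_nested_sets_iid_bernoulli_general hu0 hu1 U hUmeas hUunif A hA1 hArec
end

section
/- Let d ≥ 1, u ∈ (0,1], R > 0, and let μ be a finite measure on (0,R]. For n ∈ ℕ let μ^n(B) = μ(n^{1/2}B) and define m_n(dz) = n u ∫_{(0,R/√n]} n^{d/2} (V_r(0,z)/V_r) μ^n(dr) dz on ℝ^d, where V_r = vol(B_r(0)) and V_r(0,z) = vol(B_r(0) ∩ B_r(z)). Then the second moment of m_n is independent of n: for every n, ∫_{ℝ^d} |z|² m_n(dz) = u ∫_{ℝ^d} ∫_{(0,R]} |z|² (V_r(0,z)/V_r) μ(dr) dz. -/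
/-!
The overlap ratio `V_r(0,z)/V_r` is invariant under the joint dilation `(z, r) ↦ (c z, c r)`.
Hence substituting `r ↦ r/√n` in the inner integral and then `z ↦ √n z` in the outer one turns
the left-hand side into the right-hand side, the prefactor `n · n^{d/2}` being exactly cancelled by
the Jacobian `n^{-d/2}` of the dilation and the factor `n^{-1}` it produces in `|z|²`.
-/

open MeasureTheory Metric
open scoped ENNReal Pointwise

/-- `V_r(x, z) / V_r` in the paper's notation, for a general measure `ν` in place of `vol`. -/
noncomputable def ballOverlapRatio {X : Type*} [PseudoMetricSpace X] [MeasurableSpace X]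
    (ν : Measure X) (x z : X) (r : ℝ) : ℝ≥0∞ :=
  ν (closedBall x r ∩ closedBall z r) / ν (closedBall x r)

theorem measurable_ballOverlapRatio {X : Type*} [PseudoMetricSpace X] [MeasurableSpace X]
    (ν : Measure X) (x z : X) : Measurable (ballOverlapRatio ν x z) := by
  have mono (y : X) : Monotone (closedBall y) := fun _ _ h => closedBall_subset_closedBall h
  exact (Monotone.measurable fun _ _ h => measure_mono (Set.inter_subset_inter (mono x h)
    (mono z h))).div (Monotone.measurable fun _ _ h => measure_mono (mono x h))

section AddHaar

variable {E : Type*} [NormedAddCommGroup E] [NormedSpace ℝ E] [MeasurableSpace E] [BorelSpace E]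
  [FiniteDimensional ℝ E] (μ : Measure E) [μ.IsAddHaarMeasure]

theorem ballOverlapRatio_smul {c : ℝ} (hc : c ≠ 0) (x z : E) (r : ℝ) :
    ballOverlapRatio μ (c • x) (c • z) (‖c‖ * r) = ballOverlapRatio μ x z r := by
  have hvol : ENNReal.ofReal |c ^ Module.finrank ℝ E| ≠ 0 := by
    simpa using pow_ne_zero (Module.finrank ℝ E) hc
  simp only [ballOverlapRatio, ← smul_closedBall' hc, ← Set.smul_set_inter₀ hc,
    Measure.addHaar_smul]
  exact ENNReal.mul_div_mul_left _ _ hvol ENNReal.ofReal_ne_top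

theorem lintegral_comp_smul (f : E → ℝ≥0∞) {c : ℝ} (hc : c ≠ 0) :
    ∫⁻ x, f (c • x) ∂μ = ENNReal.ofReal |(c ^ Module.finrank ℝ E)⁻¹| * ∫⁻ x, f x ∂μ := by
  rw [← smul_eq_mul, ← lintegral_smul_measure, ← Measure.map_addHaar_smul μ hc]
  exact (lintegral_map_equiv f (MeasurableEquiv.smul₀ c hc)).symm

theorem lintegral_sq_norm_mul_comp_smul (g : E → ℝ≥0∞) {c : ℝ} (hc : c ≠ 0) :
    ∫⁻ x, ENNReal.ofReal (‖x‖ ^ 2) * g (c • x) ∂μ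
      = ENNReal.ofReal |(c ^ (Module.finrank ℝ E + 2))⁻¹|
          * ∫⁻ x, ENNReal.ofReal (‖x‖ ^ 2) * g x ∂μ := by
  have sq_norm (x : E) :
      ENNReal.ofReal (‖x‖ ^ 2) = ENNReal.ofReal |(c ^ 2)⁻¹| * ENNReal.ofReal (‖c • x‖ ^ 2) := by
    rw [← ENNReal.ofReal_mul (abs_nonneg _), norm_smul, mul_pow, Real.norm_eq_abs, sq_abs,
      abs_inv, abs_of_nonneg (sq_nonneg c), inv_mul_cancel_left₀ (pow_ne_zero 2 hc)]
  rw [lintegral_congr fun x => by rw [sq_norm, mul_assoc],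
    lintegral_const_mul' _ _ ENNReal.ofReal_ne_top,
    lintegral_comp_smul μ (fun y => ENNReal.ofReal (‖y‖ ^ 2) * g y) hc, ← mul_assoc,
    ← ENNReal.ofReal_mul (abs_nonneg _), ← abs_mul, ← mul_inv, ← pow_add, add_comm]

theorem lintegral_ballOverlapRatio_map_div (ρ : Measure ℝ) {c : ℝ} (hc : 0 < c) (x z : E) :
    ∫⁻ r, ballOverlapRatio μ x z r ∂(ρ.map (· / c))
      = ∫⁻ r, ballOverlapRatio μ (c • x) (c • z) r ∂ρ := by
  rw [lintegral_map (measurable_ballOverlapRatio μ x z) (measurable_div_const c)]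
  refine lintegral_congr fun r => ?_
  rw [← ballOverlapRatio_smul μ hc.ne' x z, Real.norm_of_nonneg hc.le, mul_div_cancel₀ r hc.ne']

end AddHaar

theorem slfv_jump_intensity_second_moment_general (d : ℕ) {u : ℝ}
    (μ : Measure ℝ) (n : ℕ) (hn : 1 ≤ n) :
    ∫⁻ (z : EuclideanSpace ℝ (Fin d)),
        ENNReal.ofReal (‖z‖ ^ 2) * ((n : ℝ≥0∞) * ENNReal.ofReal u *
          ∫⁻ r, ENNReal.ofReal ((n : ℝ) ^ ((d : ℝ) / 2)) *
              (volume (Metric.closedBall (0 : EuclideanSpace ℝ (Fin d)) r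
                  ∩ Metric.closedBall z r)
                / volume (Metric.closedBall (0 : EuclideanSpace ℝ (Fin d)) r))
            ∂(μ.map (fun r => r / Real.sqrt n)))
      = ENNReal.ofReal u *
          ∫⁻ (z : EuclideanSpace ℝ (Fin d)),
            ∫⁻ r, ENNReal.ofReal (‖z‖ ^ 2) *
                (volume (Metric.closedBall (0 : EuclideanSpace ℝ (Fin d)) r
                    ∩ Metric.closedBall z r)
                  / volume (Metric.closedBall (0 : EuclideanSpace ℝ (Fin d)) r))
              ∂μ := by
  simp only [← ballOverlapRatio.eq_1]
  set s := Real.sqrt n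
  have hs : 0 < s := Real.sqrt_pos.2 (by exact_mod_cast hn)
  have hn_pow : (n : ℝ) ^ ((d : ℝ) / 2) = s ^ d := by
    rw [Real.rpow_div_two_eq_sqrt _ n.cast_nonneg, Real.rpow_natCast]
  have hconst : (n : ℝ≥0∞) * ENNReal.ofReal (s ^ d) * ENNReal.ofReal |(s ^ (d + 2))⁻¹| = 1 := by
    rw [← ENNReal.ofReal_natCast, ← ENNReal.ofReal_mul (by positivity),
      ← ENNReal.ofReal_mul (by positivity), ENNReal.ofReal_eq_one, abs_of_pos (by positivity),
      pow_add, Real.sq_sqrt n.cast_nonneg]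
    field_simp
  calc _ = ∫⁻ z : EuclideanSpace ℝ (Fin d), ENNReal.ofReal u * (n * ENNReal.ofReal (s ^ d)) *
        (ENNReal.ofReal (‖z‖ ^ 2) * ∫⁻ r, ballOverlapRatio volume 0 (s • z) r ∂μ) := by
        refine lintegral_congr fun z => ?_
        rw [lintegral_const_mul' _ _ ENNReal.ofReal_ne_top, lintegral_ballOverlapRatio_map_div
          volume μ hs, smul_zero, hn_pow]
        ring
    _ = ENNReal.ofReal u * (n * ENNReal.ofReal (s ^ d) * ENNReal.ofReal |(s ^ (d + 2))⁻¹|) *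
        ∫⁻ z : EuclideanSpace ℝ (Fin d),
          ENNReal.ofReal (‖z‖ ^ 2) * ∫⁻ r, ballOverlapRatio volume 0 z r ∂μ := by
      rw [lintegral_const_mul' _ _ (by finiteness), lintegral_sq_norm_mul_comp_smul volume
        (fun w => ∫⁻ r, ballOverlapRatio volume 0 w r ∂μ) hs.ne', finrank_euclideanSpace_fin]
      ring
    _ = _ := by
      rw [hconst, mul_one]
      exact congrArg _ <|
        lintegral_congr fun z => (lintegral_const_mul' _ _ ENNReal.ofReal_ne_top).symm

/-- The second moment of the rescaled jump intensity `m_n` of a single lineage in the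
SΛFV dual does not depend on `n`: with `μ^n` the pushforward of `μ` under `r ↦ r/√n`,
`∫ |z|² m_n(dz) = u ∫ ∫ |z|² (V_r(0,z)/V_r) μ(dr) dz` for every `n`. -/
theorem slfv_jump_intensity_second_moment (d : ℕ) (hd : 1 ≤ d) {u : ℝ} (hu0 : 0 < u)
    (hu1 : u ≤ 1) {R : ℝ} (hR : 0 < R) (μ : Measure ℝ) [IsFiniteMeasure μ]
    (hsupp : μ (Set.Ioc 0 R)ᶜ = 0) (n : ℕ) (hn : 1 ≤ n) :
    ∫⁻ (z : EuclideanSpace ℝ (Fin d)),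
        ENNReal.ofReal (‖z‖ ^ 2) * ((n : ℝ≥0∞) * ENNReal.ofReal u *
          ∫⁻ r, ENNReal.ofReal ((n : ℝ) ^ ((d : ℝ) / 2)) *
              (volume (Metric.closedBall (0 : EuclideanSpace ℝ (Fin d)) r
                  ∩ Metric.closedBall z r)
                / volume (Metric.closedBall (0 : EuclideanSpace ℝ (Fin d)) r))
            ∂(μ.map (fun r => r / Real.sqrt n)))
      = ENNReal.ofReal u *
          ∫⁻ (z : EuclideanSpace ℝ (Fin d)),
            ∫⁻ r, ENNReal.ofReal (‖z‖ ^ 2) *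
                (volume (Metric.closedBall (0 : EuclideanSpace ℝ (Fin d)) r
                    ∩ Metric.closedBall z r)
                  / volume (Metric.closedBall (0 : EuclideanSpace ℝ (Fin d)) r))
              ∂μ :=
  slfv_jump_intensity_second_moment_general d μ n hn
end
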